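/- For every y ∈ X the expansion δ_y = Σ_{k=1}^∞ (ν^{−(k−1)} 1_{Q^{(k−1)}(y)} − ν^{−k} 1_{Q^{(k)}(y)}) holds with convergence in ℓ²(X), where the k-th summand belongs to L_k; consequently the subspaces L_1, L_2, L_3, … are mutually orthogonal and their closed linear span is all of ℓ²(X), i.e. ℓ²(X) = ⊕_{k=1}^∞ L_k. -/

import Mathlib

noncomputable section
open scoped ENNReal

def HX (ν : ℕ) : Type := {x : ℕ → Fin ν // ∃ N, ∀ n, N ≤ n → (x n : ℕ) = 0}
instance (ν : ℕ) : DecidableEq (HX ν) := Classical.decEq _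
abbrev Hl2 (ν : ℕ) : Type := lp (fun _ : HX ν => ℝ) 2
def cube (ν : ℕ) (r : ℕ) (x : HX ν) : Set (HX ν) := {y | ∀ n, r ≤ n → y.1 n = x.1 n}
def hdelta (ν : ℕ) (x : HX ν) : Hl2 ν := lp.single 2 x 1
def cubeSum (ν r : ℕ) (x : HX ν) (ψ : Hl2 ν) : ℝ := ∑' y : cube ν r x, ψ y
/-- `Lspace ν k` for `k ≥ 1`: functions constant on every cube of rank `k-1`
whose sum over every cube of rank `k` vanishes. -/
def Lspace (ν k : ℕ) : Set (Hl2 ν) :=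
  {ψ | (∀ x y, y ∈ cube ν (k - 1) x → ψ y = ψ x) ∧ ∀ x, cubeSum ν k x ψ = 0}

/-
The `k`-th summand is `a (k-1) - a k` with `a n = ν⁻ⁿ 1_{Q⁽ⁿ⁾(y)}`, so the series telescopes to
`a 0 = δ_y`; it converges absolutely because `‖a n‖ = ν^(-n/2)` (a cube of rank `n` has `νⁿ`
points). For `k < l`, an element of `L_l` is constant on the cubes of rank `l - 1 ≥ k`, while an
element of `L_k` sums to zero over each cube of rank `k`; splitting the inner product along the
partition of `X` into cubes of rank `k` gives orthogonality. The closed span of the `L_k` then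
contains every `δ_y`, hence all of `ℓ²(X)`.
-/

theorem tsum_eq_zero_of_tsum_classes_eq_zero {α E : Type*} [NormedAddCommGroup E] [CompleteSpace E]
    (s : Setoid α) {f : α → E} (hf : Summable f) (h : ∀ x, ∑' y : {y // y ≈ x}, f y.1 = 0) :
    ∑' x, f x = 0 := by
  let e := Equiv.sigmaFiberEquiv (Quotient.mk s)
  rw [← e.tsum_eq, Summable.tsum_sigma (f := fun c => f (e c)) (e.summable_iff.2 hf)]
  refine (tsum_congr fun q => ?_).trans tsum_zero
  induction q using Quotient.inductionOn with | h x => ?_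
  let e' : {y // Quotient.mk s y = ⟦x⟧} ≃ {y // y ≈ x} :=
    Equiv.subtypeEquivRight fun _ => Quotient.eq
  exact (e'.tsum_eq fun y => f y.1).trans (h x)

theorem Submodule.hasSum_mem {R β E : Type*} [Semiring R] [AddCommMonoid E] [TopologicalSpace E]
    [Module R E] {p : Submodule R E} (hp : IsClosed (p : Set E)) {g : β → E} {a : E}
    (hg : HasSum g a) (h : ∀ b, g b ∈ p) : a ∈ p :=
  hp.mem_of_tendsto hg (.of_forall fun _ => p.sum_mem fun b _ => h b)

theorem dense_span_of_hasSum_single {ι : Type*} [DecidableEq ι]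
    {S : Set (lp (fun _ : ι => ℝ) 2)}
    (h : ∀ i, ∃ g : ℕ → lp (fun _ : ι => ℝ) 2, (∀ n, g n ∈ S) ∧ HasSum g (lp.single 2 i 1)) :
    Dense (Submodule.span ℝ S : Set (lp (fun _ : ι => ℝ) 2)) := by
  set K := (Submodule.span ℝ S).topologicalClosure
  have hK : IsClosed (K : Set (lp (fun _ : ι => ℝ) 2)) := Submodule.isClosed_topologicalClosure _
  have hsingle : ∀ i, lp.single 2 i 1 ∈ K := fun i => by
    obtain ⟨g, hgS, hg⟩ := h i
    exact Submodule.hasSum_mem hK hg fun n =>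
      (Submodule.span ℝ S).le_topologicalClosure (Submodule.subset_span (hgS n))
  rw [Submodule.dense_iff_topologicalClosure_eq_top, eq_top_iff]
  intro f _
  refine Submodule.hasSum_mem hK (lp.hasSum_single ENNReal.ofNat_ne_top f) fun i => ?_
  simpa [← lp.single_smul] using K.smul_mem (f i) (hsingle i)

theorem Summable.hasSum_sub_succ {G : Type*} [AddCommGroup G] [TopologicalSpace G]
    [IsTopologicalAddGroup G] {u : ℕ → G} (hu : Summable u) :
    HasSum (fun n => u n - u (n + 1)) (u 0) := by
  simpa using hu.hasSum.sub ((hasSum_nat_add_iff' 1).2 hu.hasSum)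

namespace HX

variable {ν : ℕ}

theorem ext {x y : HX ν} (h : ∀ n, x.1 n = y.1 n) : x = y := Subtype.ext (funext h)

theorem mem_cube_self (r : ℕ) (x : HX ν) : x ∈ cube ν r x := fun _ _ => rfl

theorem mem_cube_comm {r : ℕ} {x y : HX ν} : y ∈ cube ν r x ↔ x ∈ cube ν r y :=
  ⟨fun h n hn => (h n hn).symm, fun h n hn => (h n hn).symm⟩

theorem mem_cube_trans {r : ℕ} {x y z : HX ν} (hy : y ∈ cube ν r x) (hz : z ∈ cube ν r y) :
    z ∈ cube ν r x := fun n hn => (hz n hn).trans (hy n hn)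

theorem cube_mono {r s : ℕ} (h : r ≤ s) (x : HX ν) : cube ν r x ⊆ cube ν s x :=
  fun _ hz n hn => hz n (h.trans hn)

theorem cube_eq_of_mem {r : ℕ} {x y : HX ν} (h : y ∈ cube ν r x) : cube ν r y = cube ν r x :=
  Set.ext fun _ => ⟨mem_cube_trans h, mem_cube_trans (mem_cube_comm.1 h)⟩

theorem cube_zero (x : HX ν) : cube ν 0 x = {x} :=
  Set.ext fun z => ⟨fun hz => ext fun n => hz n n.zero_le, fun hz => hz ▸ mem_cube_self 0 z⟩

def cubeSetoid (ν k : ℕ) : Setoid (HX ν) where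
  r y x := y ∈ cube ν k x
  iseqv := ⟨mem_cube_self k, mem_cube_comm.1, fun hxy hyz => mem_cube_trans hyz hxy⟩

def cubeEquiv (r : ℕ) (x : HX ν) : cube ν r x ≃ (Fin r → Fin ν) where
  toFun z i := z.1.1 i
  invFun a := ⟨⟨fun n => if h : n < r then a ⟨n, h⟩ else x.1 n, by
      obtain ⟨N, hN⟩ := x.2
      exact ⟨max N r, fun n hn => by
        simpa [dif_neg (show ¬ n < r by omega)] using hN n (by omega)⟩⟩,
    fun n hn => by simp only [dif_neg (by omega : ¬ n < r)]⟩
  left_inv z := by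
    refine Subtype.ext (ext fun n => ?_)
    by_cases h : n < r
    · simp [h]
    · simpa [h] using (z.2 n (by omega)).symm
  right_inv a := by funext i; simp [i.2]

instance (r : ℕ) (x : HX ν) : Finite (cube ν r x) := .of_equiv _ (cubeEquiv r x).symm

theorem card_cube (r : ℕ) (x : HX ν) : Nat.card (cube ν r x) = ν ^ r := by
  simp [Nat.card_congr (cubeEquiv r x)]

theorem indicator_cube_eq_of_mem {r s : ℕ} (hsr : s ≤ r) {x z : HX ν} (hz : z ∈ cube ν s x)
    (y : HX ν) (a : ℝ) :
    (cube ν r y).indicator (fun _ => a) z = (cube ν r y).indicator (fun _ => a) x := by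
  have hzx : z ∈ cube ν r y ↔ x ∈ cube ν r y := by
    rw [mem_cube_comm, cube_eq_of_mem (cube_mono hsr x hz), ← mem_cube_comm]
  by_cases hx : x ∈ cube ν r y
  · rw [Set.indicator_of_mem hx, Set.indicator_of_mem (hzx.2 hx)]
  · rw [Set.indicator_of_notMem hx, Set.indicator_of_notMem (mt hzx.1 hx)]

theorem tsum_cube_indicator_cube {r k : ℕ} (hrk : r ≤ k) (x y : HX ν) :
    ∑' z : cube ν k x, (cube ν r y).indicator (fun _ => (1 : ℝ)) z
      = (cube ν k x).indicator (fun _ => (ν : ℝ) ^ r) y := by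
  rw [tsum_subtype, Set.indicator_indicator]
  by_cases hy : y ∈ cube ν k x
  · have hsub : cube ν r y ⊆ cube ν k x :=
      (cube_mono hrk y).trans (cube_eq_of_mem hy).subset
    rw [Set.inter_eq_right.2 hsub, ← tsum_subtype, tsum_const, card_cube,
      Set.indicator_of_mem hy]
    simp
  · have hdisj : cube ν k x ∩ cube ν r y = ∅ := Set.eq_empty_of_forall_notMem fun z hz =>
      hy (mem_cube_trans hz.1 (mem_cube_comm.1 (cube_mono hrk y hz.2)))
    simp [hdisj, hy]

def cubeInd (ν r : ℕ) (y : HX ν) : Hl2 ν :=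
  ⟨(cube ν r y).indicator fun _ => 1,
    (memℓp_zero ((cube ν r y).toFinite.subset Set.support_indicator_subset)).of_exponent_ge
      zero_le⟩

def cubeAvg (ν r : ℕ) (y : HX ν) : Hl2 ν := ((ν : ℝ) ^ r)⁻¹ • cubeInd ν r y

def cubeTerm (ν : ℕ) (y : HX ν) (k : ℕ) : Hl2 ν := cubeAvg ν (k - 1) y - cubeAvg ν k y

theorem cubeTerm_apply (y : HX ν) (k : ℕ) (x : HX ν) :
    cubeTerm ν y k x = ((ν : ℝ) ^ (k - 1))⁻¹ * (cube ν (k - 1) y).indicator (fun _ => 1) x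
      - ((ν : ℝ) ^ k)⁻¹ * (cube ν k y).indicator (fun _ => 1) x := rfl

theorem cubeSum_sub (k : ℕ) (x : HX ν) (φ ψ : Hl2 ν) :
    cubeSum ν k x (φ - ψ) = cubeSum ν k x φ - cubeSum ν k x ψ :=
  Summable.tsum_sub .of_finite .of_finite

theorem cubeSum_cubeAvg {r k : ℕ} (hrk : r ≤ k) (x y : HX ν) :
    cubeSum ν k x (cubeAvg ν r y) = (cube ν k x).indicator (fun _ => 1) y := by
  -- `0 < ν` because `HX ν` is inhabited by `y`
  have hνr : (ν : ℝ) ^ r ≠ 0 := pow_ne_zero r (Nat.cast_ne_zero.2 (y.1 0).pos.ne')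
  calc cubeSum ν k x (cubeAvg ν r y)
      = ((ν : ℝ) ^ r)⁻¹ * ∑' z : cube ν k x, (cube ν r y).indicator (fun _ => 1) z :=
        tsum_mul_left
    _ = (cube ν k x).indicator (fun _ => 1) y := by
        rw [tsum_cube_indicator_cube hrk]
        by_cases hy : y ∈ cube ν k x <;> simp [hy, hνr]

theorem cubeTerm_mem_Lspace (y : HX ν) (k : ℕ) : cubeTerm ν y k ∈ Lspace ν k := by
  refine ⟨fun x z hz => ?_, fun x => ?_⟩
  · simp only [cubeTerm_apply, indicator_cube_eq_of_mem le_rfl hz,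
      indicator_cube_eq_of_mem (Nat.sub_le k 1) hz]
  · rw [cubeTerm, cubeSum_sub, cubeSum_cubeAvg (Nat.sub_le k 1), cubeSum_cubeAvg le_rfl,
      sub_self]

theorem norm_cubeInd (r : ℕ) (y : HX ν) : ‖cubeInd ν r y‖ = √ν ^ r := by
  have hsq : ‖cubeInd ν r y‖ ^ 2 = (ν : ℝ) ^ r := by
    rw [← real_inner_self_eq_norm_sq, lp.inner_eq_tsum]
    calc ∑' z, inner ℝ (cubeInd ν r y z) (cubeInd ν r y z)
        = ∑' z, (cube ν r y).indicator (fun _ => (1 : ℝ)) z :=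
          tsum_congr fun z => by by_cases hz : z ∈ cube ν r y <;> simp [cubeInd, hz]
      _ = (ν : ℝ) ^ r := by rw [← tsum_subtype, tsum_const, card_cube]; simp
  refine (sq_eq_sq₀ (norm_nonneg _) (by positivity)).1 ?_
  rw [hsq, ← pow_mul, mul_comm, pow_mul, Real.sq_sqrt (Nat.cast_nonneg ν)]

theorem norm_cubeAvg (r : ℕ) (y : HX ν) : ‖cubeAvg ν r y‖ = (√ν)⁻¹ ^ r := by
  have hν : (ν : ℝ) = √ν * √ν := (Real.mul_self_sqrt (Nat.cast_nonneg ν)).symm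
  rw [cubeAvg, norm_smul, norm_cubeInd, norm_inv, norm_pow, Real.norm_natCast]
  nth_rewrite 1 [hν]
  have hpos : 0 < √(ν : ℝ) ^ r := pow_pos (Real.sqrt_pos.2 (by exact_mod_cast (y.1 0).pos)) r
  rw [mul_pow, mul_inv, inv_pow, mul_assoc, inv_mul_cancel₀ hpos.ne', mul_one]

theorem cubeAvg_zero (y : HX ν) : cubeAvg ν 0 y = hdelta ν y := by
  ext x
  by_cases hx : x = y
  · subst hx
    simp [cubeAvg, cubeInd, hdelta, cube_zero]
  · simp [cubeAvg, cubeInd, hdelta, cube_zero, hx]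

theorem hasSum_cubeTerm (hν : 2 ≤ ν) (y : HX ν) :
    HasSum (fun k => cubeTerm ν y (k + 1)) (hdelta ν y) := by
  have hsqrt : 1 < √(ν : ℝ) :=
    (Real.lt_sqrt zero_le_one).2 (by exact_mod_cast (show 1 ^ 2 < ν by omega))
  have hs : Summable fun n => cubeAvg ν n y :=
    .of_norm_bounded (summable_geometric_of_lt_one (by positivity) (inv_lt_one_of_one_lt₀ hsqrt))
      fun n => (norm_cubeAvg n y).le
  simpa [cubeTerm, cubeAvg_zero] using hs.hasSum_sub_succ

theorem inner_eq_zero_of_mem_Lspace {k l : ℕ} (hkl : k < l) {φ χ : Hl2 ν}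
    (hφ : φ ∈ Lspace ν k) (hχ : χ ∈ Lspace ν l) : inner ℝ φ χ = 0 := by
  rw [lp.inner_eq_tsum]
  refine tsum_eq_zero_of_tsum_classes_eq_zero (cubeSetoid ν k) (lp.summable_inner φ χ) fun x => ?_
  show ∑' y : cube ν k x, inner ℝ (φ y) (χ y) = 0
  calc ∑' y : cube ν k x, inner ℝ (φ y) (χ y)
      = ∑' y : cube ν k x, φ y * χ x :=
        tsum_congr fun y => by
          simp [hχ.1 x y (cube_mono (Nat.le_sub_one_of_lt hkl) x y.2), mul_comm]
    _ = cubeSum ν k x φ * χ x := tsum_mul_right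
    _ = 0 := by rw [hφ.2 x, zero_mul]

end HX

open HX

theorem stmt2 (ν : ℕ) (hν : 2 ≤ ν) :
    (∀ y : HX ν, ∃ f : ℕ → Hl2 ν,
      (∀ k : ℕ, 1 ≤ k → ∀ x : HX ν,
        f k x = ((ν : ℝ) ^ (k - 1))⁻¹ * (cube ν (k - 1) y).indicator (fun _ => (1 : ℝ)) x
              - ((ν : ℝ) ^ k)⁻¹ * (cube ν k y).indicator (fun _ => (1 : ℝ)) x) ∧
      (∀ k : ℕ, 1 ≤ k → f k ∈ Lspace ν k) ∧
      HasSum (fun k : ℕ => f (k + 1)) (hdelta ν y)) ∧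
    (∀ k l : ℕ, 1 ≤ k → 1 ≤ l → k ≠ l →
      ∀ φ ∈ Lspace ν k, ∀ χ ∈ Lspace ν l, @inner ℝ _ _ φ χ = (0 : ℝ)) ∧
    Dense (Submodule.span ℝ (⋃ k ∈ Set.Ici 1, Lspace ν k) : Set (Hl2 ν)) := by
  refine ⟨fun y => ⟨cubeTerm ν y, fun k _ => cubeTerm_apply y k,
      fun k _ => cubeTerm_mem_Lspace y k, hasSum_cubeTerm hν y⟩, ?_, ?_⟩
  · intro k l _ _ hkl φ hφ χ hχ
    rcases hkl.lt_or_gt with hlt | hgt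
    · exact inner_eq_zero_of_mem_Lspace hlt hφ hχ
    · rw [real_inner_comm]
      exact inner_eq_zero_of_mem_Lspace hgt hχ hφ
  · refine dense_span_of_hasSum_single fun y =>
      ⟨fun k => cubeTerm ν y (k + 1), fun k => ?_, hasSum_cubeTerm hν y⟩
    exact Set.mem_biUnion (Set.mem_Ici.2 k.succ_pos) (cubeTerm_mem_Lspace y (k + 1))
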